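/- Let G be a graph, V_X a set of vertices such that G − V_X is diamond-free and every induced diamond of G uses an edge inside V_X, and C the vertex set of a maximal clique of G − V_X with |C| ≥ 2. Define A_C as the set of vertices of V_X adjacent to all vertices of C. Then A_C is a clique in G. -/

import Mathlib

/-- The diamond graph: `K₄` minus one edge. -/
def diamondGraph : SimpleGraph (Fin 4) :=
  (SimpleGraph.completeGraph (Fin 4)).deleteEdges {s(0, 1)}

/-- A graph is diamond-free if it has no induced subgraph isomorphic to a diamond. -/
def DiamondFree {V : Type*} (G : SimpleGraph V) : Prop :=
  IsEmpty (diamondGraph ↪g G)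

/-!
Two non-adjacent vertices `a b ∈ VX` with a common pair of neighbours `x y ∈ C` would span an
induced diamond whose only non-edge is `ab`; its other edges all meet `C ⊆ VXᶜ`, so it would use
no edge inside `VX`.
-/

lemma diamondGraph_not_adj_of_le_one {i j : Fin 4} (hi : i ≤ 1) (hj : j ≤ 1) :
    ¬ diamondGraph.Adj i j := by
  revert i j
  unfold diamondGraph
  decide

namespace SimpleGraph

variable {V : Type*} {G : SimpleGraph V} {a b x y : V}

def diamondEmbedding (hab : a ≠ b) (hnab : ¬ G.Adj a b) (hxy : G.Adj x y)
    (hax : G.Adj a x) (hay : G.Adj a y) (hbx : G.Adj b x) (hby : G.Adj b y) :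
    diamondGraph ↪g G where
  toFun := ![a, b, x, y]
  inj' := by
    have := hxy.ne; have := hax.ne; have := hay.ne; have := hbx.ne; have := hby.ne
    intro i j hij
    fin_cases i <;> fin_cases j <;> simp_all
  map_rel_iff' {i j} := by
    change G.Adj (![a, b, x, y] i) (![a, b, x, y] j) ↔ diamondGraph.Adj i j
    fin_cases i <;> fin_cases j <;>
      simp [diamondGraph, hnab, mt G.adj_symm hnab, hxy, hxy.symm, hax, hax.symm,
        hay, hay.symm, hbx, hbx.symm, hby, hby.symm]

end SimpleGraph

theorem stmt_12_general {V : Type*} (G : SimpleGraph V) (VX : Set V)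
    (hdia : ∀ f : diamondGraph ↪g G, ∃ x y : Fin 4,
      diamondGraph.Adj x y ∧ f x ∈ VX ∧ f y ∈ VX)
    (C : Set V) (hCdisj : C ⊆ VXᶜ) (hC : G.IsClique C)
    (h2 : (2 : ℕ∞) ≤ C.encard) :
    G.IsClique {v : V | v ∈ VX ∧ ∀ c ∈ C, G.Adj v c} := by
  rintro a ⟨haX, haC⟩ b ⟨hbX, hbC⟩ hab
  by_contra hnab
  obtain ⟨x, y, hx, hy, hxy⟩ := Set.one_lt_encard_iff.mp (lt_of_lt_of_le (by norm_num) h2)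
  let f := G.diamondEmbedding hab hnab (hC hx hy hxy) (haC x hx) (haC y hy) (hbC x hx) (hbC y hy)
  have hf : ∀ i, f i ∈ VX → i ≤ 1 := by
    intro i hi
    fin_cases i
    · decide
    · decide
    · exact absurd hi (hCdisj hx)
    · exact absurd hi (hCdisj hy)
  obtain ⟨i, j, hij, hi, hj⟩ := hdia f
  exact diamondGraph_not_adj_of_le_one (hf i hi) (hf j hj) hij

/-- With `VX` and a maximal clique `C` of `G - VX` as before and `|C| ≥ 2`, the set
`A_C` of vertices of `VX` adjacent to all vertices of `C` is a clique in `G`. -/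
theorem stmt_12 {V : Type*} (G : SimpleGraph V) (VX : Set V)
    (hdf : DiamondFree (G.induce VXᶜ))
    (hdia : ∀ f : diamondGraph ↪g G, ∃ x y : Fin 4,
      diamondGraph.Adj x y ∧ f x ∈ VX ∧ f y ∈ VX)
    (C : Set V) (hCdisj : C ⊆ VXᶜ) (hC : G.IsClique C)
    (hmax : ∀ D : Set V, G.IsClique D → D ⊆ VXᶜ → C ⊆ D → D = C)
    (h2 : (2 : ℕ∞) ≤ C.encard) :
    G.IsClique {v : V | v ∈ VX ∧ ∀ c ∈ C, G.Adj v c} :=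
  stmt_12_general G VX hdia C hCdisj hC h2
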